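/- arXiv:2001.00165 — 5 statements merged into one kernel-verified Lean document; each statement's English description precedes it below -/
import Mathlib

section
/- Let k be a field of characteristic 2 and let a₁, a₂, a₃, a₄, a₅, a₆ ∈ k with a₁ ≠ 0. Then the element f = x² + a₁xyz + a₂xy² + a₃y³z + a₄y²z² + a₅yz³ + a₆z⁴ does not lie in the ideal (x², y², z²) of the formal power series ring k[[x,y,z]]. -/
/-!
All monomials of `f` other than `a₁xyz` are divisible by one of `x², y², z²`, so `f` lies in the
ideal iff `a₁xyz` does. But every element of `(x², y², z²)` has zero coefficient at `xyz`.
-/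

open MvPowerSeries

theorem MvPowerSeries.coeff_eq_zero_of_mem_span_X_pow {σ R : Type*} [Semiring R] {n : σ → ℕ}
    {d : σ →₀ ℕ} (hd : ∀ i, d i < n i) {φ : MvPowerSeries σ R}
    (hφ : φ ∈ Ideal.span (Set.range fun i ↦ X i ^ n i)) : coeff d φ = 0 := by
  obtain ⟨c, rfl⟩ := Finsupp.mem_span_range_iff_exists_finsupp.mp hφ
  rw [Finsupp.sum, map_sum]
  exact Finset.sum_eq_zero fun i _ ↦
    X_pow_dvd_iff.mp ⟨c i, (commute_X_pow (c i) i (n i)).eq⟩ d (hd i)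

theorem stmt_0_general {k : Type*} [Field k]
    (a₁ a₂ a₃ a₄ a₅ a₆ : k) (ha₁ : a₁ ≠ 0) :
    (X 0 ^ 2 + C (σ := Fin 3) (R := k) a₁ * X 0 * X 1 * X 2 + C (σ := Fin 3) (R := k) a₂ * X 0 * X 1 ^ 2
        + C (σ := Fin 3) (R := k) a₃ * X 1 ^ 3 * X 2 + C (σ := Fin 3) (R := k) a₄ * X 1 ^ 2 * X 2 ^ 2
        + C (σ := Fin 3) (R := k) a₅ * X 1 * X 2 ^ 3 + C (σ := Fin 3) (R := k) a₆ * X 2 ^ 4 :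
      MvPowerSeries (Fin 3) k)
      ∉ Ideal.span ({X 0 ^ 2, X 1 ^ 2, X 2 ^ 2} : Set (MvPowerSeries (Fin 3) k)) := by
  have hsquares : ({X 0 ^ 2, X 1 ^ 2, X 2 ^ 2} : Set (MvPowerSeries (Fin 3) k))
      = Set.range fun i ↦ X i ^ 2 := by
    ext
    simp [Fin.exists_fin_succ, eq_comm]
  rw [hsquares]
  set I := Ideal.span (Set.range fun i : Fin 3 ↦ (X i : MvPowerSeries (Fin 3) k) ^ 2)
  set d : Fin 3 →₀ ℕ := Finsupp.single 0 1 + Finsupp.single 1 1 + Finsupp.single 2 1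
  have hxyz : X 0 * X 1 * X 2 = (monomial d 1 : MvPowerSeries (Fin 3) k) := by
    simp only [X_def, monomial_mul_monomial, mul_one, d]
  have hrest : X 0 ^ 2 * 1 + X 1 ^ 2 * (C a₂ * X 0 + C a₃ * X 1 * X 2 + C a₄ * X 2 ^ 2)
      + X 2 ^ 2 * (C a₅ * X 1 * X 2 + C a₆ * X 2 ^ 2) ∈ I := by
    refine I.add_mem (I.add_mem ?_ ?_) ?_ <;>
      exact I.mul_mem_right _ (Ideal.subset_span ⟨_, rfl⟩)
  intro hf
  have hmono : C a₁ * monomial d 1 ∈ I := by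
    convert I.sub_mem hf hrest using 1
    rw [← hxyz]
    ring
  have hcoeff := coeff_eq_zero_of_mem_span_X_pow (d := d) (fun i ↦ by fin_cases i <;> simp [d]) hmono
  rw [coeff_C_mul, coeff_monomial_same, mul_one] at hcoeff
  exact ha₁ hcoeff

theorem stmt_0 {k : Type*} [Field k] [CharP k 2]
    (a₁ a₂ a₃ a₄ a₅ a₆ : k) (ha₁ : a₁ ≠ 0) :
    (X 0 ^ 2 + C (σ := Fin 3) (R := k) a₁ * X 0 * X 1 * X 2 + C (σ := Fin 3) (R := k) a₂ * X 0 * X 1 ^ 2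
        + C (σ := Fin 3) (R := k) a₃ * X 1 ^ 3 * X 2 + C (σ := Fin 3) (R := k) a₄ * X 1 ^ 2 * X 2 ^ 2
        + C (σ := Fin 3) (R := k) a₅ * X 1 * X 2 ^ 3 + C (σ := Fin 3) (R := k) a₆ * X 2 ^ 4 :
      MvPowerSeries (Fin 3) k)
      ∉ Ideal.span ({X 0 ^ 2, X 1 ^ 2, X 2 ^ 2} : Set (MvPowerSeries (Fin 3) k)) :=
  stmt_0_general a₁ a₂ a₃ a₄ a₅ a₆ ha₁
end

section
/- Let k be a field of characteristic 2 and let a₁, a₂, a₃, a₄, a₅ ∈ k with a₁ ≠ 0. Then the element f = x² + y³ + a₁xyz + a₂xz³ + a₃z⁶ + a₄yz⁴ + a₅y²z² does not lie in the ideal (x², y², z²) of the formal power series ring k[[x,y,z]]. -/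
/-! The monomial `xyz` is divisible by none of `x², y², z²`, so its coefficient vanishes on the
whole ideal `(x², y², z²)`; in `f` that coefficient is `a₁ ≠ 0`. -/

open MvPowerSeries Finsupp

namespace MvPowerSeries

variable {σ R : Type*} [CommSemiring R]

theorem coeff_mul_X_pow_eq_zero {n : σ →₀ ℕ} {s : σ} {e : ℕ} (h : n s < e)
    (g : MvPowerSeries σ R) : coeff n (g * X s ^ e) = 0 := by
  rw [X_pow_eq, coeff_mul_monomial, if_neg]
  exact fun hle => h.not_ge (by simpa using hle s)

theorem coeff_eq_zero_of_mem_span_X_pow_s1 [Finite σ] {e : σ → ℕ} {n : σ →₀ ℕ}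
    (hn : ∀ s, n s < e s) {f : MvPowerSeries σ R}
    (hf : f ∈ Ideal.span (Set.range fun s => X s ^ e s)) : coeff n f = 0 := by
  have := Fintype.ofFinite σ
  obtain ⟨g, rfl⟩ := Ideal.mem_span_range_iff_exists_fun.mp hf
  simp [coeff_mul_X_pow_eq_zero (hn _)]

end MvPowerSeries

theorem stmt_1_general {k : Type*} [Field k]
    (a₁ a₂ a₃ a₄ a₅ : k) (ha₁ : a₁ ≠ 0) :
    (X 0 ^ 2 + X 1 ^ 3 + C a₁ * X 0 * X 1 * X 2
        + C a₂ * X 0 * X 2 ^ 3 + C a₃ * X 2 ^ 6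
        + C a₄ * X 1 * X 2 ^ 4 + C a₅ * X 1 ^ 2 * X 2 ^ 2 :
      MvPowerSeries (Fin 3) k)
      ∉ Ideal.span ({X 0 ^ 2, X 1 ^ 2, X 2 ^ 2} : Set (MvPowerSeries (Fin 3) k)) := by
  let xyz : Fin 3 →₀ ℕ := equivFunOnFinite.symm 1
  have hspan : ({X 0 ^ 2, X 1 ^ 2, X 2 ^ 2} : Set (MvPowerSeries (Fin 3) k))
      = Set.range fun s => X s ^ 2 := by
    simp [Set.ext_iff, Fin.exists_fin_succ, eq_comm]
  rw [hspan]
  intro hf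
  have hvanish := coeff_eq_zero_of_mem_span_X_pow_s1 (n := xyz) (e := fun _ => 2) (by simp [xyz]) hf
  simp only [X_def, ← monomial_zero_eq_C_apply, monomial_pow, monomial_mul_monomial, map_add,
    coeff_monomial] at hvanish
  simp [xyz, Finsupp.ext_iff, Fin.forall_fin_succ, ha₁] at hvanish

theorem stmt_1 {k : Type*} [Field k] [CharP k 2]
    (a₁ a₂ a₃ a₄ a₅ : k) (ha₁ : a₁ ≠ 0) :
    (X 0 ^ 2 + X 1 ^ 3 + C a₁ * X 0 * X 1 * X 2
        + C a₂ * X 0 * X 2 ^ 3 + C a₃ * X 2 ^ 6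
        + C a₄ * X 1 * X 2 ^ 4 + C a₅ * X 1 ^ 2 * X 2 ^ 2 :
      MvPowerSeries (Fin 3) k)
      ∉ Ideal.span ({X 0 ^ 2, X 1 ^ 2, X 2 ^ 2} : Set (MvPowerSeries (Fin 3) k)) :=
  stmt_1_general a₁ a₂ a₃ a₄ a₅ ha₁
end

section
/- Let p be an odd prime and k a field of characteristic p. Then (x² + y²(y − z²))^{p−1} = (x² + y³ − y²z²)^{p−1} does not lie in the ideal (x^p, y^p, z^p) of the formal power series ring k[[x,y,z]]. -/
open MvPowerSeries

/-!
Fedder's test reduces to one coefficient: every element of `(x^p, y^p, z^p)` has vanishing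
coefficients at all monomials with exponents `< p`, while, writing `p - 1 = 2q`, the coefficient
of `(xyz)^(2q)` in `(x² + y³ - y²z²)^(2q)` is `(-1)^q * C(2q, q)`, since the only way to reach it
is `(x²)^q (-y²z²)^q`. As `2q < p`, this binomial coefficient is prime to `p`.
-/

namespace MvPowerSeries

variable {σ R : Type*} [CommSemiring R]

theorem coeff_eq_zero_of_mem_span {T : Set (MvPowerSeries σ R)} {m : σ →₀ ℕ}
    (hT : ∀ t ∈ T, ∀ n ≤ m, coeff n t = 0) {g : MvPowerSeries σ R} (hg : g ∈ Ideal.span T) :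
    ∀ n ≤ m, coeff n g = 0 := by
  classical
  induction hg using Submodule.span_induction with
  | mem t ht => exact hT t ht
  | zero => simp
  | add x y _ _ hx hy => intro n hn; simp [hx n hn, hy n hn]
  | smul a x _ hx =>
    intro n hn
    rw [smul_eq_mul, coeff_mul]
    refine Finset.sum_eq_zero fun uv huv => ?_
    have hle : uv.2 ≤ n := by
      rw [← Finset.HasAntidiagonal.mem_antidiagonal.mp huv]; exact le_add_self
    rw [hx uv.2 (hle.trans hn), mul_zero]

theorem coeff_X_pow_eq_zero_of_lt {m : σ →₀ ℕ} {i : σ} {p : ℕ} (h : m i < p) :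
    ∀ n ≤ m, coeff n (X i ^ p : MvPowerSeries σ R) = 0 := by
  classical
  intro n hn
  rw [coeff_X_pow, if_neg]
  rintro rfl
  simpa using (hn i).trans_lt h

end MvPowerSeries

open Finset
open Finsupp (single single_apply)

section ThreeVariables

variable {R : Type*} [CommRing R]

theorem single_add_single_add_single_inj {a b c a' b' c' : ℕ} :
    (single 0 a + single 1 b + single 2 c : Fin 3 →₀ ℕ) = single 0 a' + single 1 b' + single 2 c' ↔
      a = a' ∧ b = b' ∧ c = c' := by
  refine ⟨fun h => ?_, by rintro ⟨rfl, rfl, rfl⟩; rfl⟩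
  have h0 := DFunLike.congr_fun h 0
  have h1 := DFunLike.congr_fun h 1
  have h2 := DFunLike.congr_fun h 2
  simp only [Finsupp.coe_add, Pi.add_apply, single_apply] at h0 h1 h2
  simp_all

theorem C_mul_X_pow_mul_X_pow_mul_X_pow (r : R) (a b c : ℕ) :
    C r * (X 0 ^ a * X 1 ^ b * X 2 ^ c : MvPowerSeries (Fin 3) R) =
      monomial (single 0 a + single 1 b + single 2 c) r := by
  simp only [← monomial_zero_eq_C_apply, X_pow_eq, monomial_mul_monomial, zero_add, mul_one]

theorem pow_eq_sum_monomial (n : ℕ) :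
    (X 0 ^ 2 + X 1 ^ 2 * (X 1 - X 2 ^ 2) : MvPowerSeries (Fin 3) R) ^ n =
      ∑ j ∈ range (n + 1), ∑ i ∈ range (n - j + 1),
        monomial (single 0 (2 * j) + single 1 (2 * (n - j) + i) + single 2 (2 * (n - j - i)))
          ((-1) ^ (n - j - i) * (n.choose j * (n - j).choose i : R)) := by
  rw [add_pow]
  refine sum_congr rfl fun j _ => ?_
  rw [sub_eq_add_neg, mul_pow, add_pow, Finset.mul_sum, Finset.mul_sum, Finset.sum_mul]
  refine sum_congr rfl fun i _ => ?_
  rw [← C_mul_X_pow_mul_X_pow_mul_X_pow]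
  simp only [map_mul, map_pow, map_neg, map_one, map_natCast]
  ring

theorem coeff_diagonal_pow (q : ℕ) :
    coeff (single 0 (2 * q) + single 1 (2 * q) + single 2 (2 * q))
        ((X 0 ^ 2 + X 1 ^ 2 * (X 1 - X 2 ^ 2) : MvPowerSeries (Fin 3) R) ^ (2 * q)) =
      (-1) ^ q * (2 * q).choose q := by
  have h2q : 2 * q - q = q := by omega
  simp only [pow_eq_sum_monomial, map_sum, coeff_monomial, single_add_single_add_single_inj]
  rw [sum_eq_single q, sum_eq_single 0]
  · simp [h2q]
  · exact fun i _ hi => if_neg (by omega)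
  · simp
  · intro j _ hj
    refine sum_eq_zero fun i _ => if_neg ?_
    omega
  · simp only [mem_range]
    omega

end ThreeVariables

theorem stmt_3 (p : ℕ) (hp : p.Prime) (hodd : Odd p)
    {k : Type*} [Field k] [CharP k p] :
    ((X 0 ^ 2 + X 1 ^ 2 * (X 1 - X 2 ^ 2) : MvPowerSeries (Fin 3) k) ^ (p - 1))
      ∉ Ideal.span ({X 0 ^ p, X 1 ^ p, X 2 ^ p} : Set (MvPowerSeries (Fin 3) k)) := by
  obtain ⟨q, rfl⟩ := hodd
  set m : Fin 3 →₀ ℕ := single 0 (2 * q) + single 1 (2 * q) + single 2 (2 * q)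
  have hm : ∀ i, m i < 2 * q + 1 := by
    intro i; fin_cases i <;> simp [m]
  have hgen : ∀ t ∈ ({X 0 ^ (2 * q + 1), X 1 ^ (2 * q + 1), X 2 ^ (2 * q + 1)} :
      Set (MvPowerSeries (Fin 3) k)), ∀ n ≤ m, coeff n t = 0 := by
    simp only [Set.mem_insert_iff, Set.mem_singleton_iff, forall_eq_or_imp, forall_eq]
    exact ⟨coeff_X_pow_eq_zero_of_lt (hm 0), coeff_X_pow_eq_zero_of_lt (hm 1),
      coeff_X_pow_eq_zero_of_lt (hm 2)⟩
  have hchoose : ((2 * q).choose q : k) ≠ 0 := by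
    rw [Ne, CharP.cast_eq_zero_iff k (2 * q + 1)]
    exact hp.coprime_iff_not_dvd.mp (hp.coprime_choose_of_lt (by omega) (by omega))
  intro hmem
  have := coeff_eq_zero_of_mem_span hgen hmem m le_rfl
  rw [Nat.add_sub_cancel, coeff_diagonal_pow] at this
  exact hchoose (by simpa using this)
end

section
/- Let k be a field and let f ∈ k[[x,y,z]] be a nonzero formal power series such that in_{(3,2,2)}f = x² + y³. Then ord_{(6,4,3)}f = 12 and in_{(6,4,3)}f = x² + y³ + a₁·xz² + a₂·z⁴ for some a₁, a₂ ∈ k. -/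
open MvPowerSeries

/-- The order of a multivariate power series `f` with respect to the weight vector `w`:
the minimum of `w · m` over the support of `f` (and `0` for `f = 0`, by `sInf ∅ = 0`). -/
noncomputable def wOrd {k : Type*} [Field k] (w : Fin 3 → ℕ)
    (f : MvPowerSeries (Fin 3) k) : ℕ :=
  sInf {n | ∃ m : Fin 3 →₀ ℕ, MvPowerSeries.coeff (R := k) m f ≠ 0 ∧ ∑ i, w i * m i = n}

/-- The initial term of `f` with respect to the weight vector `w`: the sum of the terms
of `f` whose exponent `m` satisfies `w · m = wOrd w f`. -/
noncomputable def wIn {k : Type*} [Field k] (w : Fin 3 → ℕ)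
    (f : MvPowerSeries (Fin 3) k) : MvPowerSeries (Fin 3) k :=
  fun m => if (∑ i, w i * m i) = wOrd w f then MvPowerSeries.coeff (R := k) m f else 0

/-!
For an exponent `m = (a, b, c)`, `(6,4,3)·m = 2 (3,2,2)·m - c`. The monomials of `f` of
`(3,2,2)`-weight `6` are only `x²` and `y³`, both with coefficient `1`, and a short case analysis on
`c` shows that the others, of `(3,2,2)`-weight `≥ 7`, have `(6,4,3)`-weight `≥ 12`, with equality
only for `xz²` and `z⁴`.
-/

open Finsupp

def wDeg (w : Fin 3 → ℕ) (m : Fin 3 →₀ ℕ) : ℕ := ∑ i, w i * m i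

@[simp]
lemma wDeg_vecCons (a b c : ℕ) (m : Fin 3 →₀ ℕ) :
    wDeg ![a, b, c] m = a * m 0 + b * m 1 + c * m 2 := by
  simp [wDeg, Fin.sum_univ_three]

section WeightedOrder

variable {k : Type*} [Field k] {w : Fin 3 → ℕ} {f g : MvPowerSeries (Fin 3) k}
  {m : Fin 3 →₀ ℕ} {d : ℕ}

lemma coeff_wIn (w : Fin 3 → ℕ) (f : MvPowerSeries (Fin 3) k) (m : Fin 3 →₀ ℕ) :
    coeff m (wIn w f) = if wDeg w m = wOrd w f then coeff m f else 0 :=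
  rfl

lemma wOrd_le_wDeg (hm : coeff m f ≠ 0) : wOrd w f ≤ wDeg w m :=
  Nat.sInf_le ⟨m, hm, rfl⟩

lemma wOrd_eq_of_le_wDeg (hm : coeff m f ≠ 0) (hmd : wDeg w m = d)
    (hle : ∀ n, coeff n f ≠ 0 → d ≤ wDeg w n) : wOrd w f = d := by
  obtain ⟨n, hn, hnd⟩ := Nat.sInf_mem (s := {n | ∃ m, coeff m f ≠ 0 ∧ wDeg w m = n}) ⟨_, m, hm, rfl⟩
  exact le_antisymm (hmd ▸ wOrd_le_wDeg hm) ((hle n hn).trans_eq hnd)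

lemma wDeg_eq_wOrd_of_wIn_eq (h : wIn w f = g) (hm : coeff m g ≠ 0) : wDeg w m = wOrd w f := by
  by_contra hne
  rw [← h, coeff_wIn, if_neg hne] at hm
  exact hm rfl

lemma coeff_eq_of_wIn_eq (h : wIn w f = g) (hm : wDeg w m = wOrd w f) :
    coeff m f = coeff m g := by
  rw [← h, coeff_wIn, if_pos hm]

lemma wIn_eq_sum_monomial (s : Finset (Fin 3 →₀ ℕ)) (hs : ∀ m ∈ s, wDeg w m = wOrd w f)
    (hsupp : ∀ m, coeff m f ≠ 0 → wDeg w m = wOrd w f → m ∈ s) :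
    wIn w f = ∑ m ∈ s, monomial m (coeff m f) := by
  ext n
  rw [coeff_wIn, map_sum]
  simp_rw [coeff_monomial]
  rw [Finset.sum_ite_eq]
  by_cases hn : n ∈ s
  · rw [if_pos (hs n hn), if_pos hn]
  · rw [if_neg hn, ite_eq_right_iff]
    exact fun hdeg => not_not.mp fun hc => hn (hsupp n hc hdeg)

end WeightedOrder

lemma le_wDeg_643_of_le_wDeg_322 {a b c : ℕ} (h6 : 6 ≤ 3 * a + 2 * b + 2 * c)
    (hx : 3 * a + 2 * b + 2 * c = 6 → a = 2 ∧ b = 0 ∧ c = 0 ∨ a = 0 ∧ b = 3 ∧ c = 0) :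
    12 ≤ 6 * a + 4 * b + 3 * c ∧
      (6 * a + 4 * b + 3 * c = 12 → a = 2 ∧ b = 0 ∧ c = 0 ∨ a = 0 ∧ b = 3 ∧ c = 0 ∨
        a = 1 ∧ b = 0 ∧ c = 2 ∨ a = 0 ∧ b = 0 ∧ c = 4) := by
  rcases Nat.lt_or_ge c 4 with hc | hc
  · interval_cases c <;> omega
  · omega

section CuspInitialForm

variable {k : Type*} [Field k] {f : MvPowerSeries (Fin 3) k}

lemma coeff_X_sq_add_X_pow_three (m : Fin 3 →₀ ℕ) :
    coeff m (X 0 ^ 2 + X 1 ^ 3 : MvPowerSeries (Fin 3) k) =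
      (if m = single 0 2 then 1 else 0) + (if m = single 1 3 then 1 else 0) := by
  rw [map_add, coeff_X_pow, coeff_X_pow]

lemma wOrd_322_eq_six (h : wIn ![3,2,2] f = X 0 ^ 2 + X 1 ^ 3) : wOrd ![3,2,2] f = 6 := by
  simpa using (wDeg_eq_wOrd_of_wIn_eq h (m := single 0 2) (by
    simp [coeff_X_sq_add_X_pow_three, Finsupp.ext_iff, Fin.forall_fin_succ])).symm

lemma coeff_eq_of_wDeg_322_eq_six (h : wIn ![3,2,2] f = X 0 ^ 2 + X 1 ^ 3) {m : Fin 3 →₀ ℕ}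
    (hm : wDeg ![3,2,2] m = 6) : coeff m f = coeff m (X 0 ^ 2 + X 1 ^ 3) :=
  coeff_eq_of_wIn_eq h (hm.trans (wOrd_322_eq_six h).symm)

lemma wDeg_643_of_coeff_ne_zero (h : wIn ![3,2,2] f = X 0 ^ 2 + X 1 ^ 3) {m : Fin 3 →₀ ℕ}
    (hm : coeff m f ≠ 0) :
    12 ≤ wDeg ![6,4,3] m ∧ (wDeg ![6,4,3] m = 12 →
      m ∈ ({single 0 2, single 1 3, single 0 1 + single 2 2, single 2 4} : Finset _)) := by
  have h6 : 6 ≤ wDeg ![3,2,2] m := wOrd_322_eq_six h ▸ wOrd_le_wDeg hm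
  have hx : wDeg ![3,2,2] m = 6 → m = single 0 2 ∨ m = single 1 3 := by
    intro hdeg
    rw [coeff_eq_of_wDeg_322_eq_six h hdeg, coeff_X_sq_add_X_pow_three] at hm
    by_contra hne
    simp [not_or.mp hne] at hm
  simp only [wDeg_vecCons, Finset.mem_insert, Finset.mem_singleton, Finsupp.ext_iff,
    Fin.forall_fin_succ] at h6 hx ⊢
  simpa using le_wDeg_643_of_le_wDeg_322 h6 (by simpa using hx)

end CuspInitialForm

theorem stmt_13_general {k : Type*} [Field k] (f : MvPowerSeries (Fin 3) k)
    (h : wIn ![3,2,2] f = X 0 ^ 2 + X 1 ^ 3) :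
    wOrd ![6,4,3] f = 12 ∧
      ∃ a₁ a₂ : k, wIn ![6,4,3] f
        = X 0 ^ 2 + X 1 ^ 3 + C (σ := Fin 3) (R := k) a₁ * X 0 * X 2 ^ 2
          + C (σ := Fin 3) (R := k) a₂ * X 2 ^ 4 := by
  have hx2 : coeff (single 0 2) f = 1 := by
    rw [coeff_eq_of_wDeg_322_eq_six h (by simp), coeff_X_sq_add_X_pow_three]
    simp [Finsupp.ext_iff, Fin.forall_fin_succ]
  have hy3 : coeff (single 1 3) f = 1 := by
    rw [coeff_eq_of_wDeg_322_eq_six h (by simp), coeff_X_sq_add_X_pow_three]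
    simp [Finsupp.ext_iff, Fin.forall_fin_succ]
  have hord : wOrd ![6,4,3] f = 12 :=
    wOrd_eq_of_le_wDeg (m := single 0 2) (by simp [hx2]) (by simp)
      fun n hn => (wDeg_643_of_coeff_ne_zero h hn).1
  refine ⟨hord, coeff (single 0 1 + single 2 2) f, coeff (single 2 4) f, ?_⟩
  rw [wIn_eq_sum_monomial _ (by simp [hord])
    fun m hm hdeg => (wDeg_643_of_coeff_ne_zero h hm).2 (hdeg.trans hord)]
  rw [Finset.sum_insert (by simp [Finsupp.ext_iff, Fin.forall_fin_succ]),
    Finset.sum_insert (by simp [Finsupp.ext_iff, Fin.forall_fin_succ]),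
    Finset.sum_insert (by simp [Finsupp.ext_iff, Fin.forall_fin_succ]), Finset.sum_singleton,
    hx2, hy3]
  simp only [X_pow_eq]
  simp only [X_def, ← monomial_zero_eq_C_apply, monomial_mul_monomial]
  simp [add_assoc]

theorem stmt_13 {k : Type*} [Field k] (f : MvPowerSeries (Fin 3) k) (hf : f ≠ 0)
    (h : wIn ![3,2,2] f = X 0 ^ 2 + X 1 ^ 3) :
    wOrd ![6,4,3] f = 12 ∧
      ∃ a₁ a₂ : k, wIn ![6,4,3] f
        = X 0 ^ 2 + X 1 ^ 3 + C (σ := Fin 3) (R := k) a₁ * X 0 * X 2 ^ 2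
          + C (σ := Fin 3) (R := k) a₂ * X 2 ^ 4 :=
  stmt_13_general f h
end

section
/- Let k be a field and let f ∈ k[[x,y,z]] be a nonzero formal power series such that in_{(15,10,6)}f = x² + y³. Then ord_{(3,2,1)}f = 6 and in_{(3,2,1)}f = x² + y³ + a₁·xyz + a₂·xz³ + a₃·z⁶ + a₄·yz⁴ + a₅·y²z² for some a₁, a₂, a₃, a₄, a₅ ∈ k. -/
open MvPowerSeries

/-!
Since `15a + 10b + 6c = 5 (3a + 2b + c) + c`, a monomial `x^a y^b z^c` of `(3,2,1)`-weight below `6`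
has `(15,10,6)`-weight below `30`, unless it is `z⁵`, of weight exactly `30`. The hypothesis forces
`ord_{(15,10,6)} f = 30` and shows that `x²` and `y³` are the only terms of `f` of weight `30`, so
no monomial of `(3,2,1)`-weight below `6` occurs in `f`, while `x²` has `(3,2,1)`-weight `6`.
Hence `ord_{(3,2,1)} f = 6`. The weight-`6` part of `f` is spanned by the seven monomials of `(3,2,1)`-weight `6`, and the
coefficients of `x²` and `y³` in it are `1`.
-/

open Finsupp

lemma sum_mul_eq_weight {σ : Type*} [Fintype σ] (w : σ → ℕ) (d : σ →₀ ℕ) :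
    ∑ i, w i * d i = weight w d := by
  simp [weight_eq_sum, mul_comm]

section WeightedInitialTerm

variable {k : Type*} [Field k] {w : Fin 3 → ℕ} {f : MvPowerSeries (Fin 3) k}

lemma wIn_eq_weightedHomogeneousComponent (w : Fin 3 → ℕ) (f : MvPowerSeries (Fin 3) k) :
    wIn w f = weightedHomogeneousComponent w (wOrd w f) f := by
  ext d
  rw [coeff_weightedHomogeneousComponent, ← sum_mul_eq_weight]
  rfl

lemma isWeightedHomogeneous_wIn : IsWeightedHomogeneous w (wIn w f) (wOrd w f) := by
  rw [wIn_eq_weightedHomogeneousComponent]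
  exact isWeightedHomogeneous_weightedHomogeneousComponent w f _

lemma coeff_wIn_of_weight_eq {d : Fin 3 →₀ ℕ} (hd : weight w d = wOrd w f) :
    coeff d (wIn w f) = coeff d f := by
  rw [wIn_eq_weightedHomogeneousComponent, coeff_weightedHomogeneousComponent, if_pos hd]

lemma wOrd_le_weight {d : Fin 3 →₀ ℕ} (hd : coeff d f ≠ 0) : wOrd w f ≤ weight w d :=
  Nat.sInf_le ⟨d, hd, sum_mul_eq_weight w d⟩

lemma coeff_eq_zero_of_weight_lt_wOrd {d : Fin 3 →₀ ℕ} (hd : weight w d < wOrd w f) :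
    coeff d f = 0 := by
  contrapose! hd
  exact wOrd_le_weight hd

lemma wOrd_eq_of_coeff_ne_zero {n : ℕ} {d : Fin 3 →₀ ℕ} (hd : coeff d f ≠ 0)
    (hdn : weight w d = n) (hlt : ∀ e, weight w e < n → coeff e f = 0) : wOrd w f = n := by
  refine le_antisymm (hdn ▸ wOrd_le_weight hd)
    (le_csInf ⟨n, d, hd, by rw [sum_mul_eq_weight, hdn]⟩ ?_)
  rintro _ ⟨e, he, rfl⟩
  rw [sum_mul_eq_weight]
  by_contra! hlt'
  exact he (hlt e hlt')

lemma wOrd_eq_of_wIn_eq {g : MvPowerSeries (Fin 3) k} (h : wIn w f = g) {d : Fin 3 →₀ ℕ}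
    (hd : coeff d g ≠ 0) : wOrd w f = weight w d :=
  (isWeightedHomogeneous_wIn (h ▸ hd)).symm

end WeightedInitialTerm

noncomputable def exp3 (a b c : ℕ) : Fin 3 →₀ ℕ := equivFunOnFinite.symm ![a, b, c]

lemma eq_exp3 (d : Fin 3 →₀ ℕ) : d = exp3 (d 0) (d 1) (d 2) := by
  ext i; fin_cases i <;> rfl

lemma exp3_inj {a b c a' b' c' : ℕ} :
    exp3 a b c = exp3 a' b' c' ↔ a = a' ∧ b = b' ∧ c = c' := by
  refine ⟨fun h => ⟨congr($h 0), congr($h 1), congr($h 2)⟩, ?_⟩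
  rintro ⟨rfl, rfl, rfl⟩; rfl

lemma weight_exp3 (w : Fin 3 → ℕ) (a b c : ℕ) :
    weight w (exp3 a b c) = w 0 * a + w 1 * b + w 2 * c := by
  rw [← sum_mul_eq_weight, Fin.sum_univ_three]
  rfl

lemma monomial_exp3 {R : Type*} [CommSemiring R] (r : R) (a b c : ℕ) :
    monomial (exp3 a b c) r = C r * X 0 ^ a * X 1 ^ b * X 2 ^ c := by
  have : exp3 a b c = single 0 a + single 1 b + single 2 c := by
    ext i; fin_cases i <;> simp [exp3]
  simp only [X_pow_eq, ← monomial_zero_eq_C_apply, monomial_mul_monomial, mul_one, zero_add, this]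

lemma X_zero_sq_add_X_one_cube {R : Type*} [CommSemiring R] :
    (X 0 ^ 2 + X 1 ^ 3 : MvPowerSeries (Fin 3) R)
      = monomial (exp3 2 0 0) 1 + monomial (exp3 0 3 0) 1 := by
  simp only [monomial_exp3, map_one, pow_zero, one_mul, mul_one]

lemma weight_lt_thirty_or_eq_of_weight_lt_six {e : Fin 3 →₀ ℕ} (he : weight ![3, 2, 1] e < 6) :
    weight ![15, 10, 6] e < 30 ∨ e = exp3 0 0 5 := by
  obtain ⟨a, b, c, rfl⟩ : ∃ a b c, e = exp3 a b c := ⟨_, _, _, eq_exp3 e⟩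
  simp only [weight_exp3, exp3_inj, Matrix.cons_val] at he ⊢
  omega

lemma eq_or_eq_of_three_mul_add_two_mul_add_eq_six {a b c : ℕ} (h : 3 * a + 2 * b + c = 6) :
    (a = 2 ∧ b = 0 ∧ c = 0) ∨ (a = 0 ∧ b = 3 ∧ c = 0) ∨ (a = 1 ∧ b = 1 ∧ c = 1)
      ∨ (a = 1 ∧ b = 0 ∧ c = 3) ∨ (a = 0 ∧ b = 0 ∧ c = 6) ∨ (a = 0 ∧ b = 1 ∧ c = 4)
      ∨ (a = 0 ∧ b = 2 ∧ c = 2) := by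
  have ha : a ≤ 2 := by omega
  have hb : b ≤ 3 := by omega
  interval_cases a <;> interval_cases b <;> omega

lemma MvPowerSeries.IsWeightedHomogeneous.eq_of_three_two_one_six {R : Type*} [CommSemiring R]
    {g : MvPowerSeries (Fin 3) R} (hg : IsWeightedHomogeneous ![3, 2, 1] g 6) :
    g = C (coeff (exp3 2 0 0) g) * X 0 ^ 2 + C (coeff (exp3 0 3 0) g) * X 1 ^ 3
      + C (coeff (exp3 1 1 1) g) * X 0 * X 1 * X 2 + C (coeff (exp3 1 0 3) g) * X 0 * X 2 ^ 3
      + C (coeff (exp3 0 0 6) g) * X 2 ^ 6 + C (coeff (exp3 0 1 4) g) * X 1 * X 2 ^ 4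
      + C (coeff (exp3 0 2 2) g) * X 1 ^ 2 * X 2 ^ 2 := by
  refine Eq.trans ?_ (by simp only [monomial_exp3, pow_zero, pow_one, mul_one] :
    monomial (exp3 2 0 0) (coeff (exp3 2 0 0) g) + monomial (exp3 0 3 0) (coeff (exp3 0 3 0) g)
      + monomial (exp3 1 1 1) (coeff (exp3 1 1 1) g) + monomial (exp3 1 0 3) (coeff (exp3 1 0 3) g)
      + monomial (exp3 0 0 6) (coeff (exp3 0 0 6) g) + monomial (exp3 0 1 4) (coeff (exp3 0 1 4) g)
      + monomial (exp3 0 2 2) (coeff (exp3 0 2 2) g) = _)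
  ext d
  obtain ⟨a, b, c, rfl⟩ : ∃ a b c, d = exp3 a b c := ⟨_, _, _, eq_exp3 d⟩
  simp only [map_add, coeff_monomial, exp3_inj]
  by_cases h6 : 3 * a + 2 * b + c = 6
  · rcases eq_or_eq_of_three_mul_add_two_mul_add_eq_six h6 with
      ⟨rfl, rfl, rfl⟩ | ⟨rfl, rfl, rfl⟩ | ⟨rfl, rfl, rfl⟩ | ⟨rfl, rfl, rfl⟩ | ⟨rfl, rfl, rfl⟩ |
      ⟨rfl, rfl, rfl⟩ | ⟨rfl, rfl, rfl⟩ <;> simp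
  · rw [hg.coeff_eq_zero (by simpa [weight_exp3] using h6)]
    split_ifs <;> first | omega | simp

theorem stmt_16_general {k : Type*} [Field k] (f : MvPowerSeries (Fin 3) k)
    (h : wIn ![15,10,6] f = X 0 ^ 2 + X 1 ^ 3) :
    wOrd ![3,2,1] f = 6 ∧
      ∃ a₁ a₂ a₃ a₄ a₅ : k, wIn ![3,2,1] f
        = X 0 ^ 2 + X 1 ^ 3 + C (σ := Fin 3) (R := k) a₁ * X 0 * X 1 * X 2
          + C (σ := Fin 3) (R := k) a₂ * X 0 * X 2 ^ 3 + C (σ := Fin 3) (R := k) a₃ * X 2 ^ 6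
          + C (σ := Fin 3) (R := k) a₄ * X 1 * X 2 ^ 4 + C (σ := Fin 3) (R := k) a₅ * X 1 ^ 2 * X 2 ^ 2 := by
  rw [X_zero_sq_add_X_one_cube] at h
  have h30 : wOrd ![15,10,6] f = 30 :=
    (wOrd_eq_of_wIn_eq h (d := exp3 2 0 0) (by simp [coeff_monomial, exp3_inj])).trans
      (by simp [weight_exp3])
  have hcoeff (d : Fin 3 →₀ ℕ) (hd : weight ![15,10,6] d = 30) :
      coeff d f = coeff d (monomial (exp3 2 0 0) 1 + monomial (exp3 0 3 0) 1) := by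
    rw [← h, coeff_wIn_of_weight_eq (hd.trans h30.symm)]
  have hx : coeff (exp3 2 0 0) f = 1 := by
    rw [hcoeff _ (by simp [weight_exp3])]; simp [coeff_monomial, exp3_inj]
  have hy : coeff (exp3 0 3 0) f = 1 := by
    rw [hcoeff _ (by simp [weight_exp3])]; simp [coeff_monomial, exp3_inj]
  have h6 : wOrd ![3,2,1] f = 6 := by
    refine wOrd_eq_of_coeff_ne_zero (d := exp3 2 0 0) (by simp [hx]) (by simp [weight_exp3]) ?_
    intro e he
    rcases weight_lt_thirty_or_eq_of_weight_lt_six he with hlt | rfl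
    · exact coeff_eq_zero_of_weight_lt_wOrd (h30 ▸ hlt)
    · rw [hcoeff _ (by simp [weight_exp3])]; simp [coeff_monomial, exp3_inj]
  have hom : IsWeightedHomogeneous ![3,2,1] (wIn ![3,2,1] f) 6 := h6 ▸ isWeightedHomogeneous_wIn
  have key := hom.eq_of_three_two_one_six
  rw [coeff_wIn_of_weight_eq (d := exp3 2 0 0) (by simp [h6, weight_exp3]), hx,
    coeff_wIn_of_weight_eq (d := exp3 0 3 0) (by simp [h6, weight_exp3]), hy, map_one, one_mul,
    one_mul] at key
  exact ⟨h6, _, _, _, _, _, key⟩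

theorem stmt_16 {k : Type*} [Field k] (f : MvPowerSeries (Fin 3) k) (hf : f ≠ 0)
    (h : wIn ![15,10,6] f = X 0 ^ 2 + X 1 ^ 3) :
    wOrd ![3,2,1] f = 6 ∧
      ∃ a₁ a₂ a₃ a₄ a₅ : k, wIn ![3,2,1] f
        = X 0 ^ 2 + X 1 ^ 3 + C (σ := Fin 3) (R := k) a₁ * X 0 * X 1 * X 2
          + C (σ := Fin 3) (R := k) a₂ * X 0 * X 2 ^ 3 + C (σ := Fin 3) (R := k) a₃ * X 2 ^ 6
          + C (σ := Fin 3) (R := k) a₄ * X 1 * X 2 ^ 4 + C (σ := Fin 3) (R := k) a₅ * X 1 ^ 2 * X 2 ^ 2 :=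
  stmt_16_general f h
end
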